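/- If (B,i,j) is a stable ADHM datum with μ(B,i,j) = 0, then the ℂ-linear map ι : ⊕_{k∈I} End(V_k) → M defined by ι(ξ) = ((B_h∘ξ_{out(h)} − ξ_{in(h)}∘B_h)_{h∈H}, (−ξ_k∘i_k)_{k∈I}, (j_k∘ξ_k)_{k∈I}) is injective. -/
import Mathlib


noncomputable section

/-- The data of a finite graph without edge loops, presented by its set `H` of oriented
edges over the vertex set `I`: source and target maps `src`, `tgt`, and a fixed-point-free
orientation-reversing involution `bar`. -/
structure GraphData (I H : Type) where
  src : H → I
  tgt : H → I
  bar : H → H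
  bar_invol : ∀ h, bar (bar h) = h
  bar_ne_self : ∀ h, bar h ≠ h
  src_bar : ∀ h, src (bar h) = tgt h
  tgt_bar : ∀ h, tgt (bar h) = src h
  no_loops : ∀ h, src h ≠ tgt h

/-- Transport of the fibres of a family of normed spaces along an equality of indices. -/
def vCast {I : Type} (V : I → Type)
    [∀ k, NormedAddCommGroup (V k)] [∀ k, NormedSpace ℂ (V k)]
    {k l : I} (e : k = l) : V k ≃L[ℂ] V l := by
  subst e
  exact ContinuousLinearEquiv.refl ℂ (V k)

/-- Stability of an ADHM datum `(B, i, j)`: the only family of subspaces `S k ⊆ V k`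
which is `B`-invariant and contained in `ker (j k)` is the zero family. -/
def IsStable {I H : Type} (G : GraphData I H) (V W : I → Type)
    [∀ k, NormedAddCommGroup (V k)] [∀ k, NormedSpace ℂ (V k)]
    [∀ k, NormedAddCommGroup (W k)] [∀ k, NormedSpace ℂ (W k)]
    (B : ∀ h : H, V (G.src h) →L[ℂ] V (G.tgt h))
    (j : ∀ k : I, V k →L[ℂ] W k) : Prop :=
  ∀ S : ∀ k : I, Submodule ℂ (V k),
    (∀ h : H, ∀ x ∈ S (G.src h), B h x ∈ S (G.tgt h)) →
    (∀ k : I, ∀ x ∈ S k, j k x = 0) →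
    ∀ k : I, S k = ⊥

/-- For an oriented edge `h`, the composite `A ∘ A'` of a map `A` along `h` and a map `A'`
along `bar h`, as an endomorphism of `V (tgt h)`. -/
def barComp {I H : Type} (G : GraphData I H) (V : I → Type)
    [∀ k, NormedAddCommGroup (V k)] [∀ k, NormedSpace ℂ (V k)] (h : H)
    (A : V (G.src h) →L[ℂ] V (G.tgt h))
    (A' : V (G.src (G.bar h)) →L[ℂ] V (G.tgt (G.bar h))) :
    V (G.tgt h) →L[ℂ] V (G.tgt h) :=
  A.comp ((vCast V (G.tgt_bar h) : V (G.tgt (G.bar h)) →L[ℂ] V (G.src h)).comp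
    (A'.comp ((vCast V (G.src_bar h)).symm : V (G.tgt h) →L[ℂ] V (G.src (G.bar h)))))

/-- The `k`-th component of the moment map `μ(B, i, j) = ε B B + i j`. -/
def momentMap {I H : Type} [Fintype H] [DecidableEq I] (G : GraphData I H)
    (V W : I → Type)
    [∀ k, NormedAddCommGroup (V k)] [∀ k, NormedSpace ℂ (V k)]
    [∀ k, NormedAddCommGroup (W k)] [∀ k, NormedSpace ℂ (W k)]
    (ε : H → ℂ)
    (B : ∀ h : H, V (G.src h) →L[ℂ] V (G.tgt h))
    (i : ∀ k : I, W k →L[ℂ] V k) (j : ∀ k : I, V k →L[ℂ] W k) (k : I) :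
    V k →L[ℂ] V k :=
  (∑ h : H, if e : G.tgt h = k then
      ((vCast V e : V (G.tgt h) →L[ℂ] V k).comp
        ((ε h • barComp G V h (B h) (B (G.bar h))).comp
          ((vCast V e).symm : V k →L[ℂ] V (G.tgt h))))
    else 0)
    + (i k).comp (j k)

/-- The map `ι` sending `ξ ∈ ⊕ₖ End(V_k)` to
`((B_h ∘ ξ_{out h} − ξ_{in h} ∘ B_h)_h, (−ξ_k ∘ i_k)_k, (j_k ∘ ξ_k)_k)`. -/
def iotaMap {I H : Type} (G : GraphData I H) (V W : I → Type)
    [∀ k, NormedAddCommGroup (V k)] [∀ k, NormedSpace ℂ (V k)]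
    [∀ k, NormedAddCommGroup (W k)] [∀ k, NormedSpace ℂ (W k)]
    (B : ∀ h : H, V (G.src h) →L[ℂ] V (G.tgt h))
    (i : ∀ k : I, W k →L[ℂ] V k) (j : ∀ k : I, V k →L[ℂ] W k)
    (ξ : ∀ k : I, V k →L[ℂ] V k) :
    (∀ h : H, V (G.src h) →L[ℂ] V (G.tgt h)) ×
      (∀ k : I, W k →L[ℂ] V k) × (∀ k : I, V k →L[ℂ] W k) :=
  (fun h => (B h).comp (ξ (G.src h)) - (ξ (G.tgt h)).comp (B h),
   fun k => -((ξ k).comp (i k)),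
   fun k => (j k).comp (ξ k))

/-- If `(B, i, j)` is a stable ADHM datum with `μ(B,i,j) = 0`, then the
map `ι : ⊕ₖ End(V_k) → M`,
`ι(ξ) = ((B_h∘ξ_{out(h)} − ξ_{in(h)}∘B_h)_h, (−ξ_k∘i_k)_k, (j_k∘ξ_k)_k)`, is injective. -/
theorem statement2
    {I H : Type} [Fintype I] [Fintype H] [DecidableEq I]
    (G : GraphData I H) (V W : I → Type)
    [∀ k, NormedAddCommGroup (V k)] [∀ k, NormedSpace ℂ (V k)]
    [∀ k, FiniteDimensional ℂ (V k)]
    [∀ k, NormedAddCommGroup (W k)] [∀ k, NormedSpace ℂ (W k)]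
    [∀ k, FiniteDimensional ℂ (W k)]
    (ε : H → ℂ) (hε0 : ∀ h, ε h ≠ 0) (hεbar : ∀ h, ε (G.bar h) = - ε h)
    (B : ∀ h : H, V (G.src h) →L[ℂ] V (G.tgt h))
    (i : ∀ k : I, W k →L[ℂ] V k) (j : ∀ k : I, V k →L[ℂ] W k)
    (hst : IsStable G V W B j)
    (hμ : ∀ k : I, momentMap G V W ε B i j k = 0) :
    Function.Injective (iotaMap G V W B i j) := by
  intro ξ ξ' hEq
  set η : ∀ k : I, V k →L[ℂ] V k := fun k => ξ k - ξ' k with hηdef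
  have h1 : ∀ h : H, (B h).comp (ξ (G.src h)) - (ξ (G.tgt h)).comp (B h)
      = (B h).comp (ξ' (G.src h)) - (ξ' (G.tgt h)).comp (B h) :=
    fun h => congrFun (congrArg Prod.fst hEq) h
  have h3 : ∀ k : I, (j k).comp (ξ k) = (j k).comp (ξ' k) :=
    fun k => congrFun (congrArg (fun p => p.2.2) hEq) k
  have hB : ∀ (h : H) (x : V (G.src h)), B h (η (G.src h) x) = η (G.tgt h) (B h x) := by
    intro h x
    have e := ContinuousLinearMap.ext_iff.mp (h1 h) x
    simp only [ContinuousLinearMap.sub_apply, ContinuousLinearMap.comp_apply] at e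
    simp only [hηdef, ContinuousLinearMap.sub_apply, map_sub]
    rw [sub_eq_sub_iff_sub_eq_sub] at e
    exact e
  have hj : ∀ (k : I) (x : V k), j k (η k x) = 0 := by
    intro k x
    have e := ContinuousLinearMap.ext_iff.mp (h3 k) x
    simp only [ContinuousLinearMap.comp_apply] at e
    simp only [hηdef, ContinuousLinearMap.sub_apply, map_sub, e, sub_self]
  have hr := hst (fun k => LinearMap.range (η k : V k →ₗ[ℂ] V k))
    (by
      intro h x hx
      obtain ⟨y, rfl⟩ := hx
      exact ⟨B h y, (hB h y).symm⟩)
    (by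
      intro k x hx
      obtain ⟨y, rfl⟩ := hx
      exact hj k y)
  funext k
  have hz : ∀ x : V k, η k x = 0 := by
    intro x
    have : η k x ∈ LinearMap.range (η k : V k →ₗ[ℂ] V k) := ⟨x, rfl⟩
    have hb : LinearMap.range (η k : V k →ₗ[ℂ] V k) = ⊥ := hr k
    rw [hb] at this
    simpa using this
  ext x
  have := hz x
  simpa [hηdef, sub_eq_zero] using this
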